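/- Let M be a matroid on ground set E, realized by its lattice of flats L, with an ordering ◁ on the atoms of L. If S is a maximal nested set of (L, G) for a building set G, then the set of labels λ(S) = {λ(g) | g ∈ S ∪ {⊤}}, where λ(g) is the minimal atom a (with respect to ◁) such that (⋁ S_{<g}) ∨ a = g, is an nbc-basis of L (a basis containing no broken circuit). -/

import Mathlib

open scoped Classical

variable {L : Type*} [Lattice L] [BoundedOrder L] [Finite L]

/-- The join of a (finite) subset of `L`. -/
noncomputable def setJoin (S : Set L) : L := S.toFinite.toFinset.sup id

/-- The join of a subset of `L`, relative to a base point `a`. -/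
noncomputable def joinFrom (a : L) (S : Set L) : L := a ⊔ setJoin S

/-- The `G`-factors of `F`: the maximal elements of `{g ∈ G | g ≤ F}`. -/
def factors (G : Set L) (F : L) : Set L :=
  {g ∈ G | g ≤ F ∧ ∀ h ∈ G, h ≤ F → g ≤ h → g = h}

/-- `G` is a building set of the interval `[a, b]` of `L`: the join map
from the product of the intervals `[a, g]` over the `G`-factors `g` of `F`
to `[a, F]` is an order isomorphism, for every `F ∈ [a, b]`. -/
def IsBuildingIcc (a b : L) (G : Set L) : Prop :=
  G ⊆ Set.Icc a b ∧ a ∉ G ∧ ∀ F ∈ Set.Icc a b,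
    ∃ e : (∀ g : factors G F, Set.Icc a (g : L)) ≃o Set.Icc a F,
      ∀ x, ((e x : L)) = joinFrom a (Set.range fun g => ((x g : L)))

/-- `G` is a building set of the lattice `L`. -/
def IsBuilding (G : Set L) : Prop := IsBuildingIcc ⊥ ⊤ G

/-- `S` is a nested set of the built lattice `(L, G)`. -/
def IsNested (G S : Set L) : Prop :=
  S ⊆ G ∧ ∀ A ⊆ S, IsAntichain (· ≤ ·) A → 2 ≤ A.ncard → setJoin A ∉ G

/-- The building ideal generated by `g`. -/
def buildingIdeal (G : Set L) (g : L) : Set L := {F | g ∈ factors G F}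

/-- A set of atoms is dependent if one of its elements lies below the join of the others. -/
def DepSet (A : Set L) : Prop := ∃ a ∈ A, a ≤ setJoin (A \ {a})

/-- A circuit: a minimal dependent set of atoms. -/
def IsCircuitSet (A : Set L) : Prop :=
  (∀ a ∈ A, IsAtom a) ∧ DepSet A ∧ ∀ B : Set L, B ⊂ A → ¬ DepSet B

section NBCAuxSection

namespace NBCAux

set_option linter.unusedVariables false
set_option linter.unusedSectionVars false

lemma le_setJoin {A : Set L} {a : L} (h : a ∈ A) : a ≤ setJoin A :=
  Finset.le_sup (f := id) (A.toFinite.mem_toFinset.mpr h)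

lemma setJoin_le {A : Set L} {x : L} (h : ∀ a ∈ A, a ≤ x) : setJoin A ≤ x :=
  Finset.sup_le fun b hb => h b (A.toFinite.mem_toFinset.mp hb)

lemma setJoin_mono {A B : Set L} (h : A ⊆ B) : setJoin A ≤ setJoin B :=
  setJoin_le fun a ha => le_setJoin (h ha)

lemma setJoin_empty : setJoin (∅ : Set L) = ⊥ := by
  simp [setJoin]

lemma setJoin_singleton (a : L) : setJoin ({a} : Set L) = a :=
  le_antisymm (setJoin_le (by rintro b rfl; rfl)) (le_setJoin rfl)

/-- every element of a finite set lies below a maximal one -/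
lemma exists_maximal_above {A : Set L} {a : L} (ha : a ∈ A) :
    ∃ b, b ∈ A ∧ a ≤ b ∧ ∀ c ∈ A, b ≤ c → b = c := by
  obtain ⟨b, hb, hmax⟩ := Set.Finite.exists_maximalFor id {c ∈ A | a ≤ c}
    (Set.toFinite _) ⟨a, ha, le_rfl⟩
  exact ⟨b, hb.1, hb.2, fun c hc hbc => le_antisymm hbc (hmax ⟨hc, hb.2.trans hbc⟩ hbc)⟩

lemma exists_minimal_mem {A : Set L} (hne : A.Nonempty) :
    ∃ b ∈ A, ∀ c ∈ A, c ≤ b → c = b := by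
  obtain ⟨b, hb, hmin⟩ := Set.Finite.exists_minimalFor id A (Set.toFinite _) hne
  exact ⟨b, hb, fun c hc hcb => le_antisymm hcb (hmin hc hcb)⟩

def maximalElts (A : Set L) : Set L := {a ∈ A | ∀ b ∈ A, a ≤ b → a = b}

lemma maximalElts_subset (A : Set L) : maximalElts A ⊆ A := fun _ h => h.1

lemma maximalElts_antichain (A : Set L) : IsAntichain (· ≤ ·) (maximalElts A) :=
  fun a ha b hb hne hle => hne (ha.2 b hb.1 hle)

lemma setJoin_maximalElts (A : Set L) : setJoin (maximalElts A) = setJoin A := by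
  refine le_antisymm (setJoin_mono (maximalElts_subset A)) (setJoin_le fun a ha => ?_)
  obtain ⟨b, hbA, hab, hmax⟩ := exists_maximal_above ha
  exact hab.trans (le_setJoin ⟨hbA, fun c hc hbc => hmax c hc hbc⟩)

lemma exists_factor_above {G : Set L} {h F : L} (hh : h ∈ G) (hF : h ≤ F) :
    ∃ g, g ∈ factors G F ∧ h ≤ g := by
  obtain ⟨b, hb, hab, hmax⟩ := exists_maximal_above (A := {g ∈ G | g ≤ F}) ⟨hh, hF⟩
  exact ⟨b, ⟨hb.1, hb.2, fun h' hh' hF' hle => hmax h' ⟨hh', hF'⟩ hle⟩, hab⟩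

/-- injectivity consequence of the building-set isomorphism -/
lemma building_factor_eq {G : Set L} (hG : IsBuilding G) (F : L)
    (y : factors G F → L) (hy : ∀ g, y g ≤ (g : L))
    (hjoin : setJoin (Set.range y) = F) : ∀ g, y g = (g : L) := by
  obtain ⟨e, he⟩ := hG.2.2 F ⟨bot_le, le_top⟩
  set x : ∀ g : factors G F, Set.Icc (⊥ : L) (g : L) := fun g => ⟨y g, bot_le, hy g⟩ with hxdef
  set xt : ∀ g : factors G F, Set.Icc (⊥ : L) (g : L) := fun g => ⟨(g : L), bot_le, le_rfl⟩
    with hxtdef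
  have hex : (e x : L) = F := by
    have h1 := he x
    have h2 : (Set.range fun g => ((x g : L))) = Set.range y := by
      ext z; constructor
      · rintro ⟨g, rfl⟩; exact ⟨g, rfl⟩
      · rintro ⟨g, rfl⟩; exact ⟨g, rfl⟩
    rw [h1, joinFrom, h2, hjoin, bot_sup_eq]
  have hext : (e xt : L) = F := by
    obtain ⟨w, hw⟩ := e.surjective ⟨F, bot_le, le_rfl⟩
    have hwle : w ≤ xt := fun g => (w g).2.2
    have h1 : (⟨F, bot_le, le_rfl⟩ : Set.Icc (⊥ : L) F) ≤ e xt := hw ▸ e.monotone hwle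
    exact le_antisymm (e xt).2.2 h1
  have hxx : x = xt := e.injective (Subtype.ext (hex.trans hext.symm))
  intro g
  exact congrArg Subtype.val (congrFun hxx g)

lemma nested_insert_top {G S : Set L} (hS : IsNested G S) (htop : (⊤ : L) ∈ G) :
    IsNested G (insert ⊤ S) := by
  constructor
  · rintro x (rfl | hx)
    · exact htop
    · exact hS.1 hx
  · intro A hA hanti hcard
    have hAS : A ⊆ S := by
      intro a ha
      rcases hA ha with rfl | h
      · exfalso
        obtain ⟨b, hb, hne⟩ := Set.exists_ne_of_one_lt_ncard hcard (⊤ : L)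
        exact hanti hb ha hne le_top
      · exact h
    exact hS.2 A hAS hanti hcard

/-- factors of the join of an antichain in a nested set -/
lemma factors_antichain {G T : Set L} (hG : IsBuilding G) (hT : IsNested G T)
    {A : Set L} (hA : A ⊆ T) (hanti : IsAntichain (· ≤ ·) A) :
    factors G (setJoin A) = A := by
  set F := setJoin A with hF
  have hAG : A ⊆ G := fun a ha => hT.1 (hA ha)
  have hφ : ∀ a ∈ A, ∃ g, g ∈ factors G F ∧ a ≤ g := fun a ha =>
    exists_factor_above (hAG ha) (le_setJoin ha)
  set y : factors G F → L := fun g => setJoin {a ∈ A | a ≤ (g : L)} with hy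
  have hyle : ∀ g : factors G F, y g ≤ (g : L) := fun g => setJoin_le fun a ha => ha.2
  have hjoin : setJoin (Set.range y) = F := by
    refine le_antisymm (setJoin_le ?_) (setJoin_le ?_)
    · rintro z ⟨g, rfl⟩
      exact (hyle g).trans g.2.2.1
    · intro a ha
      obtain ⟨g, hg, hag⟩ := hφ a ha
      exact (le_setJoin (show a ∈ {a' ∈ A | a' ≤ (g : L)} from ⟨ha, hag⟩)).trans
        (le_setJoin ⟨(⟨g, hg⟩ : factors G F), rfl⟩)
  have hkey := building_factor_eq hG F y hyle hjoin
  have hsub : factors G F ⊆ A := by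
    intro g hg
    have hgy : setJoin {a ∈ A | a ≤ g} = g := hkey ⟨g, hg⟩
    set Ag : Set L := {a ∈ A | a ≤ g} with hAg
    have hAgA : Ag ⊆ A := fun a ha => ha.1
    rcases Set.eq_empty_or_nonempty Ag with hemp | ⟨a, haAg⟩
    · exfalso
      rw [hemp, setJoin_empty] at hgy
      exact hG.2.1 (hgy ▸ hg.1)
    · by_cases h2 : ∃ b ∈ Ag, b ≠ a
      · exfalso
        obtain ⟨b, hbAg, hba⟩ := h2
        have hcard : 2 ≤ Ag.ncard := by
          have hss : ({b, a} : Set L) ⊆ Ag := by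
            rintro z (rfl | rfl) <;> assumption
          calc 2 = ({b, a} : Set L).ncard := by
                rw [Set.ncard_pair hba]
            _ ≤ Ag.ncard := Set.ncard_le_ncard hss (Set.toFinite _)
        exact hT.2 Ag (hAgA.trans hA) (hanti.subset hAgA) hcard (hgy ▸ hg.1)
      · push_neg at h2
        have hsingle : Ag = {a} := Set.eq_singleton_iff_unique_mem.mpr ⟨haAg, h2⟩
        have hga : g = a := by rw [← hgy, hsingle, setJoin_singleton]
        exact hga ▸ haAg.1
  refine le_antisymm hsub ?_
  intro a ha
  obtain ⟨g, hg, hag⟩ := hφ a ha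
  have hgA : g ∈ A := hsub hg
  have heq : a = g := by
    by_contra hne
    exact hanti ha hgA hne hag
  exact heq ▸ hg

/-- an atom below the join of an antichain in a nested set lies below one of its elements -/
lemma atom_le_of_le_antichain {G T : Set L} (hG : IsBuilding G) (hT : IsNested G T)
    {A : Set L} (hA : A ⊆ T) (hanti : IsAntichain (· ≤ ·) A)
    {m : L} (hm : IsAtom m) (hle : m ≤ setJoin A) : ∃ a ∈ A, m ≤ a := by
  set F := setJoin A with hF
  obtain ⟨e, he⟩ := hG.2.2 F ⟨bot_le, le_top⟩
  set x := e.symm ⟨m, bot_le, hle⟩ with hx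
  have hexm : (e x : L) = m := by rw [hx, e.apply_symm_apply]
  have hex : setJoin (Set.range fun g => ((x g : L))) = m := by
    have hexval := he x
    rw [joinFrom, bot_sup_eq] at hexval
    rw [← hexval, hexm]
  have hnonbot : ∃ g₀ : factors G F, (x g₀ : L) ≠ ⊥ := by
    by_contra hall
    push_neg at hall
    have hmbot : m ≤ ⊥ := by
      rw [← hex]
      exact setJoin_le (by rintro z ⟨g, rfl⟩; exact (hall g).le)
    exact hm.1 (le_bot_iff.mp hmbot)
  obtain ⟨g₀, hg₀⟩ := hnonbot
  have huniq : ∀ g : factors G F, g ≠ g₀ → (x g : L) = ⊥ := by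
    intro g₁ hne
    by_contra hg₁
    set z : ∀ g : factors G F, Set.Icc (⊥ : L) (g : L) :=
      fun g => if g = g₁ then ⟨⊥, le_rfl, bot_le⟩ else x g with hz
    have hzx : z ≤ x := by
      intro g
      by_cases h : g = g₁
      · subst h; simp only [hz, if_pos rfl]; exact bot_le
      · simp only [hz, if_neg h]; exact le_rfl
    have hez : (e z : L) ≤ m := by
      have hmono := e.monotone hzx
      rw [hx, e.apply_symm_apply] at hmono
      exact hmono
    have hezval := he z
    rw [joinFrom, bot_sup_eq] at hezval
    have hg₀z : (x g₀ : L) ≤ (e z : L) := by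
      rw [hezval]
      refine le_setJoin ⟨g₀, ?_⟩
      simp only [hz, if_neg (show g₀ ≠ g₁ from fun h => hne h.symm)]
    have hezbot : (e z : L) ≠ ⊥ := fun h => hg₀ (le_bot_iff.mp (hg₀z.trans (le_of_eq h)))
    have hezm : (e z : L) = m := by
      rcases lt_or_eq_of_le hez with h | h
      · exact absurd (hm.2 _ h) hezbot
      · exact h
    have heze : e z = e x := by
      apply Subtype.ext; rw [hezm, hexm]
    have hzx2 : z = x := e.injective heze
    have hzg : (z g₁ : L) = (x g₁ : L) := congrArg Subtype.val (congrFun hzx2 g₁)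
    simp only [hz, if_pos rfl] at hzg
    exact hg₁ hzg.symm
  have hmg₀ : m ≤ (x g₀ : L) := by
    rw [← hex]
    refine setJoin_le ?_
    rintro w ⟨g, rfl⟩
    by_cases h : g = g₀
    · subst h; exact le_rfl
    · show (x g : L) ≤ (x g₀ : L); rw [huniq g h]; exact bot_le
  have hg₀A : (g₀ : L) ∈ A := by
    rw [← factors_antichain hG hT hA hanti]; exact g₀.2
  exact ⟨g₀, hg₀A, hmg₀.trans (x g₀).2.2⟩

lemma covby_sup_atom (hsm : ∀ a b : L, a ⊓ b ⋖ a → b ⋖ a ⊔ b) {x a : L}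
    (ha : IsAtom a) (hax : ¬ a ≤ x) : x ⋖ x ⊔ a := by
  have h1 : a ⊓ x ⋖ a := by
    have hne : a ⊓ x ≠ a := fun h => hax (h ▸ inf_le_right)
    have hbot : a ⊓ x = ⊥ := ha.2 _ (lt_of_le_of_ne inf_le_left hne)
    rw [hbot]
    exact ha.bot_covBy
  have h2 := hsm a x h1
  rwa [sup_comm a x] at h2

lemma atom_exchange (hsm : ∀ a b : L, a ⊓ b ⋖ a → b ⋖ a ⊔ b) {x a b : L}
    (ha : IsAtom a) (hb : IsAtom b)
    (h : a ≤ x ⊔ b) (hax : ¬ a ≤ x) : b ≤ x ⊔ a := by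
  have hbx : ¬ b ≤ x := fun hbx => hax (h.trans (sup_le le_rfl hbx))
  have hcov : x ⋖ x ⊔ b := covby_sup_atom hsm hb hbx
  have hlt : x < x ⊔ a := lt_of_le_of_ne le_sup_left (fun hh => hax (hh ▸ le_sup_right))
  have hle : x ⊔ a ≤ x ⊔ b := sup_le le_sup_left h
  have heq : x ⊔ a = x ⊔ b := by
    rcases lt_or_eq_of_le hle with hlt2 | heq
    · exact absurd hlt2 (hcov.2 hlt)
    · exact heq
  exact heq ▸ le_sup_right

lemma indep_absorb {B : Set L} {a : L} (ha : a ∈ B) (h : a ≤ setJoin (B \ {a}))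
    (htopB : setJoin B = ⊤) : setJoin (B \ {a}) = ⊤ := by
  refine le_antisymm le_top ?_
  rw [← htopB]
  refine setJoin_le ?_
  intro b hb
  by_cases hba : b = a
  · exact hba ▸ h
  · exact le_setJoin ⟨hb, hba⟩

section Grade
variable [GradeBoundedOrder ℕ L]

lemma grade_bot_nat : grade ℕ (⊥ : L) = 0 :=
  Nat.le_zero.mp ((isMin_bot.grade ℕ) (Nat.zero_le _))

lemma grade_covby {a b : L} (h : a ⋖ b) : grade ℕ b = grade ℕ a + 1 :=
  (Order.covBy_iff_add_one_eq.mp (h.grade ℕ)).symm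

lemma grade_finset_sup_le_card (hsm : ∀ a b : L, a ⊓ b ⋖ a → b ⋖ a ⊔ b) (t : Finset L)
    (ht : ∀ a ∈ t, IsAtom a) :
    grade ℕ (t.sup id) ≤ t.card := by
  classical
  induction t using Finset.induction_on with
  | empty => simp [grade_bot_nat]
  | @insert a s hna ih =>
    have hs : ∀ b ∈ s, IsAtom b := fun b hb => ht b (Finset.mem_insert_of_mem hb)
    have hsup : (insert a s).sup id = a ⊔ s.sup id := by
      rw [Finset.sup_insert]; rfl
    rw [hsup, Finset.card_insert_of_notMem hna]
    by_cases hle : a ≤ s.sup id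
    · rw [sup_eq_right.mpr hle]
      exact (ih hs).trans (Nat.le_succ _)
    · have hcov : s.sup id ⋖ s.sup id ⊔ a :=
        covby_sup_atom hsm (ht a (Finset.mem_insert_self a s)) hle
      rw [sup_comm a (s.sup id), grade_covby hcov]
      exact Nat.succ_le_succ (ih hs)

/-- an injective `ℕ`-valued function strictly extending the order on a finite graded lattice -/
noncomputable def K (x : L) : ℕ := grade ℕ x * Nat.card L + ((Finite.equivFin L) x : ℕ)

lemma K_lt_of_lt {a b : L} (h : a < b) : K a < K b := by
  have hg : grade ℕ a < grade ℕ b := grade_strictMono h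
  have h1 : ((Finite.equivFin L) a : ℕ) < Nat.card L := ((Finite.equivFin L) a).2
  calc K a < grade ℕ a * Nat.card L + Nat.card L := Nat.add_lt_add_left h1 _
    _ = (grade ℕ a + 1) * Nat.card L := by ring
    _ ≤ grade ℕ b * Nat.card L := Nat.mul_le_mul_right _ hg
    _ ≤ K b := Nat.le_add_right _ _

lemma K_inj : Function.Injective (K (L := L)) := by
  intro a b h
  have h1 : ((Finite.equivFin L) a : ℕ) < Nat.card L := ((Finite.equivFin L) a).2
  have h2 : ((Finite.equivFin L) b : ℕ) < Nat.card L := ((Finite.equivFin L) b).2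
  unfold K at h
  have hg : grade ℕ a = grade ℕ b := by
    rcases Nat.lt_trichotomy (grade ℕ a) (grade ℕ b) with hlt | he | hlt
    · nlinarith
    · exact he
    · nlinarith
  have he : ((Finite.equivFin L) a : ℕ) = ((Finite.equivFin L) b : ℕ) := by
    rw [hg] at h; omega
  exact (Finite.equivFin L).injective (Fin.ext he)

end Grade

end NBCAux

end NBCAuxSection

/-- In a geometric lattice `L` of rank `n` with atoms totally ordered by an injective
map `ord`, the labels of a maximal nested set of a built lattice `(L, G)` form an
nbc-basis of `L`: a basis (a minimal set of atoms with join `⊤`, of cardinality `n`)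
containing no broken circuit. -/
theorem labels_of_maximal_nested_set_nbc [GradeBoundedOrder ℕ L]
    (hatomistic : ∀ x : L, ∃ A : Set L, (∀ a ∈ A, IsAtom a) ∧ setJoin A = x)
    (hsemimod : ∀ a b : L, a ⊓ b ⋖ a → b ⋖ a ⊔ b)
    (ord : L → ℕ) (hord : ∀ a b : L, IsAtom a → IsAtom b → ord a = ord b → a = b)
    (G : Set L) (hG : IsBuilding G) (htop : (⊤ : L) ∈ G)
    (S : Set L) (hS : IsNested G S) (hStop : (⊤ : L) ∉ S)
    (hmax : ∀ S' : Set L, IsNested G S' → (⊤ : L) ∉ S' → S ⊆ S' → S' = S)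
    (lab : L → L)
    (hlab : ∀ g ∈ insert (⊤ : L) S,
      IsAtom (lab g) ∧ setJoin {h ∈ S | h < g} ⊔ lab g = g ∧
        ∀ a : L, IsAtom a → setJoin {h ∈ S | h < g} ⊔ a = g → ord (lab g) ≤ ord a) :
    (∀ a ∈ lab '' insert (⊤ : L) S, IsAtom a) ∧
    setJoin (lab '' insert (⊤ : L) S) = ⊤ ∧
    (∀ b ∈ lab '' insert (⊤ : L) S, setJoin ((lab '' insert (⊤ : L) S) \ {b}) ≠ ⊤) ∧
    (lab '' insert (⊤ : L) S).ncard = grade ℕ (⊤ : L) ∧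
    (∀ C : Set L, ∀ m ∈ C, IsCircuitSet C → (∀ c ∈ C, c ≠ m → ord m < ord c) →
      ¬ (C \ {m}) ⊆ lab '' insert (⊤ : L) S) := by
  classical
  open NBCAux in
  set T : Set L := insert (⊤ : L) S with hT
  have hTnest : IsNested G T := nested_insert_top hS htop
  have hTG : T ⊆ G := hTnest.1
  have htopT : (⊤ : L) ∈ T := Set.mem_insert _ _
  have hatoms : ∀ a ∈ lab '' T, IsAtom a := by
    rintro a ⟨g, hg, rfl⟩; exact (hlab g hg).1
  have hlab_le : ∀ g ∈ T, lab g ≤ g := by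
    intro g hg
    exact le_trans le_sup_right (le_of_eq (hlab g hg).2.1)
  -- the crux: no element of `T` lies below the join of the `K`-earlier ones
  have hcrux : ∀ g ∈ T, ¬ g ≤ setJoin {h ∈ T | K h < K g} := by
    intro g hg hle
    set Ps : Set L := {h ∈ T | K h < K g} with hPs
    set A := maximalElts Ps with hA
    have hAT : A ⊆ T := fun a ha => (maximalElts_subset Ps ha).1
    have hanti := maximalElts_antichain Ps
    have hgle : g ≤ setJoin A := by
      rw [hA, setJoin_maximalElts]; exact hle
    obtain ⟨f, hf, hgf⟩ := exists_factor_above (hTG hg) hgle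
    rw [factors_antichain hG hTnest hAT hanti] at hf
    have hfPs : f ∈ Ps := maximalElts_subset Ps hf
    have hKf : K f < K g := hfPs.2
    rcases eq_or_lt_of_le hgf with rfl | hlt
    · exact absurd hKf (lt_irrefl _)
    · have := K_lt_of_lt hlt
      omega
  have hcruxlab : ∀ g ∈ T, ¬ lab g ≤ setJoin {h ∈ T | K h < K g} := by
    intro g hg hle
    have hσ : setJoin {h ∈ S | h < g} ≤ setJoin {h ∈ T | K h < K g} :=
      setJoin_mono (fun h hh => ⟨Set.mem_insert_of_mem _ hh.1, K_lt_of_lt hh.2⟩)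
    have hgle : setJoin {h ∈ S | h < g} ⊔ lab g ≤ setJoin {h ∈ T | K h < K g} :=
      sup_le hσ hle
    rw [(hlab g hg).2.1] at hgle
    exact hcrux g hg hgle
  have hinj : Set.InjOn lab T := by
    intro g hg g' hg' heq
    by_contra hne
    have hKne : K g ≠ K g' := fun h => hne (K_inj h)
    rcases Nat.lt_or_ge (K g) (K g') with hlt | hge
    · exact hcruxlab g' hg' (heq ▸ ((hlab_le g hg).trans (le_setJoin ⟨hg, hlt⟩)))
    · have hlt' : K g' < K g := by omega
      exact hcruxlab g hg (heq.symm ▸ ((hlab_le g' hg').trans (le_setJoin ⟨hg', hlt'⟩)))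
  -- chain lemma: `K`-downward-closed subsets of `T` have grade equal to cardinality
  have hchain : ∀ n : ℕ, ∀ u : Finset L, u.card = n → ↑u ⊆ T →
      (∀ g ∈ u, ∀ h ∈ T, K h < K g → h ∈ u) → grade ℕ (u.sup id) = u.card := by
    intro n
    induction n using Nat.strong_induction_on with
    | _ n ih =>
      intro u hcard huT hdc
      rcases Finset.eq_empty_or_nonempty u with rfl | hne
      · simp [grade_bot_nat]
      · obtain ⟨g, hgu, hgmax⟩ := Finset.exists_max_image u K hne
        set u' := u.erase g with hu'
        have hins : u = insert g u' := (Finset.insert_erase hgu).symm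
        have hu'T : ↑u' ⊆ T := fun h hh =>
          huT (Finset.mem_coe.mpr (Finset.mem_of_mem_erase (Finset.mem_coe.mp hh)))
        have hdc' : ∀ g₂ ∈ u', ∀ h ∈ T, K h < K g₂ → h ∈ u' := by
          intro g₂ hg₂ h hh hK
          have hhu : h ∈ u := hdc g₂ (Finset.mem_of_mem_erase hg₂) h hh hK
          refine Finset.mem_erase.mpr ⟨?_, hhu⟩
          rintro rfl
          have hle := hgmax g₂ (Finset.mem_of_mem_erase hg₂)
          omega
        have hgT : g ∈ T := huT (Finset.mem_coe.mpr hgu)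
        have hu'lt : u'.sup id ≤ setJoin {h ∈ T | K h < K g} := by
          refine Finset.sup_le ?_
          intro h hh
          have hne2 : h ≠ g := (Finset.mem_erase.mp hh).1
          have hKne : K h ≠ K g := fun he => hne2 (K_inj he)
          have hle := hgmax h (Finset.mem_of_mem_erase hh)
          show h ≤ setJoin {h' ∈ T | K h' < K g}
          exact le_setJoin ⟨hu'T (Finset.mem_coe.mpr hh), by omega⟩
        have hσ : setJoin {h ∈ S | h < g} ≤ u'.sup id := by
          refine setJoin_le ?_
          intro h hh
          have hhT : h ∈ T := Set.mem_insert_of_mem _ hh.1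
          have hhu : h ∈ u := hdc g hgu h hhT (K_lt_of_lt hh.2)
          exact Finset.le_sup (f := id) (Finset.mem_erase.mpr ⟨ne_of_lt hh.2, hhu⟩)
        have hsup : u.sup id = lab g ⊔ u'.sup id := by
          rw [hins, Finset.sup_insert]
          show g ⊔ u'.sup id = lab g ⊔ u'.sup id
          apply le_antisymm
          · refine sup_le ?_ le_sup_right
            calc g = setJoin {h ∈ S | h < g} ⊔ lab g := ((hlab g hgT).2.1).symm
              _ ≤ lab g ⊔ u'.sup id := sup_le (hσ.trans le_sup_right) le_sup_left
          · exact sup_le ((hlab_le g hgT).trans le_sup_left) le_sup_right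
        have hnlab : ¬ lab g ≤ u'.sup id := fun hcon =>
          hcruxlab g hgT (hcon.trans hu'lt)
        have hcov : u'.sup id ⋖ u.sup id := by
          rw [hsup, sup_comm (lab g) (u'.sup id)]
          exact covby_sup_atom hsemimod (hlab g hgT).1 hnlab
        have hpos : 0 < n := hcard ▸ Finset.card_pos.mpr hne
        have hcard' : u'.card = n - 1 := by rw [hu', Finset.card_erase_of_mem hgu, hcard]
        have hrec := ih (n - 1) (by omega) u' hcard' hu'T hdc'
        rw [grade_covby hcov, hrec, hcard', hcard]
        omega
  -- the full finset of T
  set t : Finset L := T.toFinite.toFinset with ht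
  have htmem : ∀ {x : L}, x ∈ t ↔ x ∈ T := fun {x} => T.toFinite.mem_toFinset
  have htsup : t.sup id = ⊤ :=
    le_antisymm le_top (Finset.le_sup (f := id) (htmem.mpr htopT))
  have hgradetop : grade ℕ (⊤ : L) = t.card := by
    have h := hchain t.card t rfl (fun x hx => htmem.mp (Finset.mem_coe.mp hx))
      (fun g _ h hh _ => htmem.mpr hh)
    rw [← htsup, h]
  -- joins of label-initial-segments
  have hJ : ∀ n : ℕ, ∀ g ∈ T, K g = n → setJoin (lab '' {h ∈ T | h ≤ g}) = g := by
    intro n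
    induction n using Nat.strong_induction_on with
    | _ n ih =>
      intro g hgT hKg
      refine le_antisymm (setJoin_le ?_) ?_
      · rintro a ⟨h, hh, rfl⟩
        exact (hlab_le h hh.1).trans hh.2
      · refine le_trans (le_of_eq ((hlab g hgT).2.1).symm)
          (sup_le ?_ (le_setJoin ⟨g, ⟨hgT, le_rfl⟩, rfl⟩))
        refine setJoin_le ?_
        intro h hh
        have hhT : h ∈ T := Set.mem_insert_of_mem _ hh.1
        have hKh : K h < n := hKg ▸ K_lt_of_lt hh.2
        rw [← ih (K h) hKh h hhT rfl]
        refine setJoin_mono ?_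
        rintro a ⟨h', hh', rfl⟩
        exact ⟨h', ⟨hh'.1, hh'.2.trans hh.2.le⟩, rfl⟩
  have hjoinT : setJoin (lab '' T) = ⊤ := by
    have h := hJ (K (⊤ : L)) ⊤ htopT rfl
    have hset : {h ∈ T | h ≤ ⊤} = T := by
      ext h; exact ⟨fun hh => hh.1, fun hh => ⟨hh, le_top⟩⟩
    rw [hset] at h
    exact h
  have hncard : (lab '' T).ncard = grade ℕ (⊤ : L) := by
    rw [Set.ncard_image_of_injOn hinj, hgradetop, ht]
    rw [Set.ncard_eq_toFinset_card T T.toFinite]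
  -- independence
  have hindep : ∀ b ∈ lab '' T, setJoin ((lab '' T) \ {b}) ≠ ⊤ := by
    intro b hb htopeq
    set u := ((lab '' T) \ {b}).toFinite.toFinset with hu
    have hua : ∀ a ∈ u, IsAtom a := fun a ha =>
      hatoms a (((lab '' T) \ {b}).toFinite.mem_toFinset.mp ha).1
    have hb1 : grade ℕ (setJoin ((lab '' T) \ {b})) ≤ u.card :=
      grade_finset_sup_le_card hsemimod u hua
    rw [htopeq] at hb1
    have hucard : u.card = ((lab '' T) \ {b}).ncard :=
      (Set.ncard_eq_toFinset_card _ _).symm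
    have hdiff : ((lab '' T) \ {b}).ncard = (lab '' T).ncard - 1 :=
      Set.ncard_diff_singleton_of_mem hb
    have hpos : 0 < (lab '' T).ncard := by
      rw [Set.ncard_pos]
      exact ⟨lab ⊤, ⟨⊤, htopT, rfl⟩⟩
    rw [hucard, hdiff, ← hncard] at hb1
    omega
  refine ⟨hatoms, hjoinT, hindep, hncard, ?_⟩
  -- the nbc condition
  intro C m hmC hcirc hmin hsub
  obtain ⟨hCatom, hCdep, hCmin⟩ := hcirc
  have hmatom : IsAtom m := hCatom m hmC
  set B := lab '' T with hB
  have hmB : m ∉ B := by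
    intro hmB
    obtain ⟨a, haC, hadep⟩ := hCdep
    have hCB : C ⊆ B := by
      intro c hc
      by_cases hcm : c = m
      · exact hcm ▸ hmB
      · exact hsub ⟨hc, hcm⟩
    have h1 : a ≤ setJoin (B \ {a}) :=
      hadep.trans (setJoin_mono (fun c hc => ⟨hCB hc.1, hc.2⟩))
    exact hindep a (hCB haC) (indep_absorb (hCB haC) h1 hjoinT)
  have hmD : m ≤ setJoin (C \ {m}) := by
    obtain ⟨a, haC, hadep⟩ := hCdep
    by_cases ham : a = m
    · exact ham ▸ hadep
    · have hxa : ¬ a ≤ setJoin ((C \ {m}) \ {a}) := by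
        intro hcon
        exact hCmin (C \ {m}) (Set.sdiff_singleton_ssubset.mpr hmC)
          ⟨a, ⟨haC, ham⟩, hcon⟩
      have h1 : a ≤ setJoin ((C \ {m}) \ {a}) ⊔ m := by
        refine hadep.trans (setJoin_le ?_)
        intro c hc
        by_cases hcm : c = m
        · exact hcm ▸ le_sup_right
        · exact (le_setJoin (show c ∈ (C \ {m}) \ {a} from ⟨⟨hc.1, hcm⟩, hc.2⟩)).trans
            le_sup_left
      have hex := atom_exchange hsemimod (hCatom a haC) hmatom h1 hxa
      exact hex.trans (sup_le (setJoin_mono Set.diff_subset) (le_setJoin ⟨haC, ham⟩))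
  obtain ⟨g, hgm, hgminimal⟩ :=
    exists_minimal_mem (A := {g ∈ T | m ≤ g}) ⟨⊤, htopT, le_top⟩
  have hgT : g ∈ T := hgm.1
  have hmg : m ≤ g := hgm.2
  have hmσ : ¬ m ≤ setJoin {h ∈ S | h < g} := by
    intro hcon
    set A := maximalElts {h ∈ S | h < g} with hA
    have hAT : A ⊆ T := fun a ha => Set.mem_insert_of_mem _ ((maximalElts_subset _ ha).1)
    obtain ⟨a, haA, hma⟩ := atom_le_of_le_antichain hG hTnest hAT
      (maximalElts_antichain _) hmatom (by rw [hA, setJoin_maximalElts]; exact hcon)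
    have haS := maximalElts_subset _ haA
    have heq : a = g := hgminimal a ⟨Set.mem_insert_of_mem _ haS.1, hma⟩ haS.2.le
    exact absurd (heq ▸ haS.2) (lt_irrefl g)
  set σg := setJoin {h ∈ S | h < g} with hσg
  have hσle : σg ≤ g := setJoin_le (fun h hh => hh.2.le)
  have hlabg := hlab g hgT
  set b := lab g with hbdef
  have hgb : σg ⊔ b = g := hlabg.2.1
  have hblt : ¬ b ≤ σg := by
    intro hcon
    have hgs : g = σg := by
      rw [← hgb]; exact le_antisymm (sup_le le_rfl hcon) le_sup_left
    exact hmσ (hgs ▸ hmg)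
  have hcov : σg ⋖ g := by
    have h := covby_sup_atom hsemimod hlabg.1 hblt
    rwa [hgb] at h
  have hgm2 : σg ⊔ m = g := by
    rcases lt_or_eq_of_le (sup_le hσle hmg : σg ⊔ m ≤ g) with hlt | he
    · exact absurd hlt
        (hcov.2 (lt_of_le_of_ne le_sup_left (fun hh => hmσ (hh ▸ le_sup_right))))
    · exact he
  have hordb : ord b ≤ ord m := hlabg.2.2 m hmatom hgm2
  by_cases hbC : b ∈ C \ {m}
  · exact absurd (hmin b hbC.1 hbC.2) (not_lt.mpr hordb)
  · have hbB : b ∈ B := ⟨g, hgT, rfl⟩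
    have hDB : C \ {m} ⊆ B \ {b} := fun c hc =>
      ⟨hsub hc, fun (h : c = b) => hbC (h ▸ hc)⟩
    have hmY : m ≤ setJoin (B \ {b}) := hmD.trans (setJoin_mono hDB)
    have hσY : σg ≤ setJoin (B \ {b}) := by
      refine setJoin_le ?_
      intro h hh
      have hhT : h ∈ T := Set.mem_insert_of_mem _ hh.1
      have h1 : h = setJoin (lab '' {h' ∈ T | h' ≤ h}) := (hJ (K h) h hhT rfl).symm
      rw [h1]
      refine setJoin_le ?_
      rintro a ⟨h', hh', rfl⟩
      refine le_setJoin ⟨⟨h', hh'.1, rfl⟩, ?_⟩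
      intro hcon
      have hh'g : h' = g := hinj hh'.1 hgT hcon
      have hlt : h' < g := lt_of_le_of_lt hh'.2 hh.2
      rw [hh'g] at hlt
      exact lt_irrefl g hlt
    have hbY : b ≤ setJoin (B \ {b}) := by
      have h1 : m ≤ σg ⊔ b := hgb.symm ▸ hmg
      have hex := atom_exchange hsemimod hmatom hlabg.1 h1 hmσ
      exact hex.trans (sup_le hσY hmY)
    exact hindep b hbB (indep_absorb hbB hbY hjoinT)
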